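/- arXiv:1501.01239 — 2 statements merged into one kernel-verified Lean document; each statement's English description precedes it below -/
import Mathlib

section
/- Let S be a complete and consistent SPN and let v be a product node with children v_1,...,v_l. If a variable X lies in scope(v_i) ∩ scope(v_j) for some i ≠ j, then there is a single value x* of X such that every monomial in the expanded form of f_{v_i} and every monomial in the expanded form of f_{v_j} contains the indicator I[X = x*]. -/
/-! By completeness, every variable in the scope of a node occurs in each monomial of its expanded
polynomial, and each indicator of such a monomial is an indicator of the node. Consistency of the
product node forces all indicators of `X` below the two children to carry one common value. -/

noncomputable section

open Finset

/-- A Sum-Product Network over `N` Boolean variables: leaves are indicators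
`I[X_i = b]`, internal nodes are weighted sums and products. -/
inductive SPN (N : ℕ) where
  | leaf (i : Fin N) (b : Bool)
  | sum (k : ℕ) (w : Fin k → ℝ) (ch : Fin k → SPN N)
  | prod (k : ℕ) (ch : Fin k → SPN N)

namespace SPN

variable {N : ℕ}

/-- The network polynomial, evaluated at a complete assignment. -/
def eval : SPN N → (Fin N → Bool) → ℝ
  | .leaf i b, x => if x i = b then 1 else 0
  | .sum _ w ch, x => ∑ j, w j * eval (ch j) x
  | .prod _ ch, x => ∏ j, eval (ch j) x

/-- The scope of a node: the variables appearing among its descendant indicators. -/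
def scope : SPN N → Finset (Fin N)
  | .leaf i _ => {i}
  | .sum _ _ ch => univ.biUnion fun j => scope (ch j)
  | .prod _ ch => univ.biUnion fun j => scope (ch j)

/-- Size of an SPN: number of nodes plus number of edges. -/
def size : SPN N → ℕ
  | .leaf _ _ => 1
  | .sum k _ ch => 1 + k + ∑ j, size (ch j)
  | .prod k ch => 1 + k + ∑ j, size (ch j)

/-- Completeness: all children of every sum node have the same scope. -/
def complete : SPN N → Prop
  | .leaf _ _ => True
  | .sum _ _ ch => (∀ i j, scope (ch i) = scope (ch j)) ∧ ∀ j, complete (ch j)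
  | .prod _ ch => ∀ j, complete (ch j)

/-- Decomposability: children of every product node have pairwise disjoint scopes. -/
def decomposable : SPN N → Prop
  | .leaf _ _ => True
  | .sum _ _ ch => ∀ j, decomposable (ch j)
  | .prod _ ch =>
      (∀ i j, i ≠ j → Disjoint (scope (ch i)) (scope (ch j))) ∧ ∀ j, decomposable (ch j)

/-- The set of indicators `(variable, value)` appearing among descendants. -/
def indicators : SPN N → Finset (Fin N × Bool)
  | .leaf i b => {(i, b)}
  | .sum _ _ ch => univ.biUnion fun j => indicators (ch j)
  | .prod _ ch => univ.biUnion fun j => indicators (ch j)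

/-- Consistency: no variable appears negated in one child of a product node and
non-negated in another child. -/
def consistent : SPN N → Prop
  | .leaf _ _ => True
  | .sum _ _ ch => ∀ j, consistent (ch j)
  | .prod _ ch =>
      (∀ i j X, i ≠ j → (X, true) ∈ indicators (ch i) →
        (X, false) ∈ indicators (ch j) → False) ∧ ∀ j, consistent (ch j)

/-- All sum-node weights are nonnegative. -/
def nonnegWeights : SPN N → Prop
  | .leaf _ _ => True
  | .sum _ w ch => (∀ j, 0 ≤ w j) ∧ ∀ j, nonnegWeights (ch j)
  | .prod _ ch => ∀ j, nonnegWeights (ch j)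

/-- Weight-normalized: at every sum node the weights are nonnegative and sum to 1. -/
def weightNormalized : SPN N → Prop
  | .leaf _ _ => True
  | .sum _ w ch => (∀ j, 0 ≤ w j) ∧ (∑ j, w j) = 1 ∧ ∀ j, weightNormalized (ch j)
  | .prod _ ch => ∀ j, weightNormalized (ch j)

/-- Extend an assignment of the scope variables to a complete assignment
(variables outside the scope are set to `false`; `eval` does not depend on them). -/
def extendScope (S : SPN N) (y : {i // i ∈ scope S} → Bool) : Fin N → Bool :=
  fun i => if h : i ∈ scope S then y ⟨i, h⟩ else false

/-- The sum of the network polynomial of `S` over all assignments of the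
variables in `scope S`. -/
def val (S : SPN N) : ℝ :=
  ∑ y : {i // i ∈ scope S} → Bool, eval S (extendScope S y)

/-- The probability distribution induced by an SPN:
`Pr S x = f_S(x) / Σ_y f_S(y)`, the sum ranging over assignments of the scope. -/
def Pr (S : SPN N) (x : Fin N → Bool) : ℝ := eval S x / val S

end SPN
namespace SPN

variable {N : ℕ}

/-- A monomial: a coefficient together with a multiset of indicators. -/
abbrev Monomial (N : ℕ) := ℝ × Multiset (Fin N × Bool)

/-- Product of two sum-of-products expansions. -/
def mulMono (a b : Multiset (Monomial N)) : Multiset (Monomial N) :=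
  a.bind fun m => b.map fun m' => (m.1 * m'.1, m.2 + m'.2)

/-- The fully expanded sum-of-products form of the network polynomial,
obtained by distributing products over sums. -/
def monomials : SPN N → Multiset (Monomial N)
  | .leaf i b => {(1, {(i, b)})}
  | .sum _ w ch => ∑ j, (monomials (ch j)).map fun m => (w j * m.1, m.2)
  | .prod k ch => (List.ofFn fun j : Fin k => monomials (ch j)).foldr mulMono {(1, 0)}

/-- Two SPNs have the same DAG structure (only sum-node weights may differ). -/
def sameShape : SPN N → SPN N → Prop
  | .leaf i b, .leaf i' b' => i = i' ∧ b = b'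
  | .sum k _ ch, .sum k' _ ch' => ∃ h : k = k', ∀ j, sameShape (ch j) (ch' (Fin.cast h j))
  | .prod k ch, .prod k' ch' => ∃ h : k = k', ∀ j, sameShape (ch j) (ch' (Fin.cast h j))
  | _, _ => False

/-- `IsChild c p`: `c` is a child of `p`. -/
inductive IsChild : SPN N → SPN N → Prop
  | sum {k : ℕ} {w : Fin k → ℝ} {ch : Fin k → SPN N} (j : Fin k) :
      IsChild (ch j) (.sum k w ch)
  | prod {k : ℕ} {ch : Fin k → SPN N} (j : Fin k) :
      IsChild (ch j) (.prod k ch)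

/-- `Descendant d v`: `d` is a (weak) descendant of `v`. -/
def Descendant : SPN N → SPN N → Prop := Relation.ReflTransGen IsChild

/-- A decision stump: a univariate distribution `p·I[X=1] + (1-p)·I[X=0]`
over a single Boolean variable, used as terminal node of a normal SPN. -/
def isStump : SPN N → Prop
  | .sum 2 w ch =>
      (∃ i, ch 0 = .leaf i true ∧ ch 1 = .leaf i false) ∧
      0 ≤ w 0 ∧ 0 ≤ w 1 ∧ w 0 + w 1 = 1
  | _ => False

/-- Condition 3 of normality: terminal nodes are univariate distributions and
every (proper) sum node has scope of size at least 2. -/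
def normal3 : SPN N → Prop
  | .leaf _ _ => False
  | .sum k w ch =>
      isStump (SPN.sum k w ch) ∨
      (2 ≤ (scope (SPN.sum k w ch)).card ∧ ∀ j, normal3 (ch j))
  | .prod _ ch => ∀ j, normal3 (ch j)

/-- A normal SPN: complete, decomposable, weight-normalized, terminal nodes are
univariate distributions, and sum nodes have scope of size at least 2. -/
def normal (S : SPN N) : Prop :=
  complete S ∧ decomposable S ∧ weightNormalized S ∧ normal3 S

/-- The height of an SPN: length of the longest root-to-leaf path. -/
def height : SPN N → ℕ
  | .leaf _ _ => 0
  | .sum _ _ ch => 1 + Finset.univ.sup fun j => height (ch j)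
  | .prod _ ch => 1 + Finset.univ.sup fun j => height (ch j)

/-- Sum layers alternate with product layers. -/
def alternating : SPN N → Prop
  | .leaf _ _ => True
  | .sum _ _ ch => ∀ j,
      (¬ ∃ (k' : ℕ) (w' : Fin k' → ℝ) (ch' : Fin k' → SPN N), ch j = SPN.sum k' w' ch') ∧
      alternating (ch j)
  | .prod _ ch => ∀ j,
      (¬ ∃ (k' : ℕ) (ch' : Fin k' → SPN N), ch j = SPN.prod k' ch') ∧
      alternating (ch j)

/-- The number of hidden-variable parents of the observable `X` in the constructed
BN: the number of sum nodes whose scope contains `X`. -/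
def parentCount : SPN N → Fin N → ℕ
  | .leaf _ _, _ => 0
  | .sum k w ch, X =>
      (if X ∈ scope (SPN.sum k w ch) then 1 else 0) + ∑ j, parentCount (ch j) X
  | .prod _ ch, X => ∑ j, parentCount (ch j) X

/-- The number of sum nodes (hidden variables of the constructed BN). -/
def countSum : SPN N → ℕ
  | .leaf _ _ => 0
  | .sum _ _ ch => 1 + ∑ j, countSum (ch j)
  | .prod _ ch => ∑ j, countSum (ch j)

/-- Total size of the decision-stump ADDs of the hidden variables. -/
def stumpsSize : SPN N → ℕ
  | .leaf _ _ => 0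
  | .sum k _ ch => (1 + k) + ∑ j, stumpsSize (ch j)
  | .prod _ ch => ∑ j, stumpsSize (ch j)

/-- Total number of edges of the bipartite BN graph: a hidden variable `H_v`
points to observable `X` iff `X ∈ scope v`. -/
def sumScopeEdges : SPN N → ℕ
  | .leaf _ _ => 0
  | .sum k w ch => (scope (SPN.sum k w ch)).card + ∑ j, sumScopeEdges (ch j)
  | .prod _ ch => ∑ j, sumScopeEdges (ch j)

/-- Size of the ADD `A_X` of observable `X`: the size of the sub-SPN induced by
the nodes whose scope contains `X` (an upper bound on the contracted ADD). -/
def addSize : SPN N → Fin N → ℕ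
  | .leaf i _, X => if i = X then 1 else 0
  | .sum k w ch, X =>
      (if X ∈ scope (SPN.sum k w ch) then
        1 + (Finset.univ.filter fun j => X ∈ scope (ch j)).card
       else 0) + ∑ j, addSize (ch j) X
  | .prod k ch, X =>
      (if X ∈ scope (SPN.prod k ch) then
        1 + (Finset.univ.filter fun j => X ∈ scope (ch j)).card
       else 0) + ∑ j, addSize (ch j) X

end SPN

/-- A bipartite Bayesian network over `N` observable Boolean variables:
hidden (source) variables `H` with unconditional priors, and observable
variables whose CPDs are conditioned on the hidden variables. -/
structure BayesNet (N : ℕ) where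
  H : Type
  fintypeH : Fintype H
  decEqH : DecidableEq H
  dom : H → ℕ
  prior : (h : H) → Fin (dom h) → ℝ
  cpd : Fin N → ((h : H) → Fin (dom h)) → Bool → ℝ

attribute [instance] BayesNet.fintypeH BayesNet.decEqH

/-- The marginal distribution of the observables in a bipartite BN: sum over all
hidden assignments of the product of all priors and all CPDs. -/
def BayesNet.PrB {N : ℕ} (B : BayesNet N) (x : Fin N → Bool) : ℝ :=
  ∑ σ : (h : B.H) → Fin (B.dom h),
    (∏ h, B.prior h (σ h)) * ∏ i, B.cpd i σ (x i)

namespace SPN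

variable {N : ℕ}

lemma mem_mulMono {a b : Multiset (Monomial N)} {m : Monomial N} :
    m ∈ mulMono a b ↔ ∃ ma ∈ a, ∃ mb ∈ b, (ma.1 * mb.1, ma.2 + mb.2) = m := by
  simp only [mulMono, Multiset.mem_bind, Multiset.mem_map]

lemma exists_le_of_mem_foldr_mulMono {L : List (Multiset (Monomial N))} {m : Monomial N}
    (hm : m ∈ L.foldr mulMono {(1, 0)}) {s : Multiset (Monomial N)} (hs : s ∈ L) :
    ∃ ms ∈ s, ms.2 ≤ m.2 := by
  induction L generalizing m with
  | nil => cases hs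
  | cons a L ih =>
    obtain ⟨ma, hma, mb, hmb, rfl⟩ := mem_mulMono.1 hm
    rcases List.mem_cons.1 hs with rfl | hs
    · exact ⟨ma, hma, Multiset.le_add_right _ _⟩
    · obtain ⟨ms, hms, hle⟩ := ih hmb hs
      exact ⟨ms, hms, hle.trans (Multiset.le_add_left _ _)⟩

lemma exists_mem_of_mem_foldr_mulMono {L : List (Multiset (Monomial N))} {m : Monomial N}
    (hm : m ∈ L.foldr mulMono {(1, 0)}) {p : Fin N × Bool} (hp : p ∈ m.2) :
    ∃ s ∈ L, ∃ ms ∈ s, p ∈ ms.2 := by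
  induction L generalizing m with
  | nil =>
    rw [List.foldr_nil, Multiset.mem_singleton] at hm
    simp [hm] at hp
  | cons a L ih =>
    obtain ⟨ma, hma, mb, hmb, rfl⟩ := mem_mulMono.1 hm
    rcases Multiset.mem_add.1 hp with hp | hp
    · exact ⟨a, List.mem_cons_self, ma, hma, hp⟩
    · obtain ⟨s, hs, ms, hms, hp⟩ := ih hmb hp
      exact ⟨s, List.mem_cons_of_mem _ hs, ms, hms, hp⟩

lemma mem_monomials_sum {k : ℕ} {w : Fin k → ℝ} {ch : Fin k → SPN N} {m : Monomial N} :
    m ∈ (sum k w ch).monomials ↔ ∃ j, ∃ m' ∈ (ch j).monomials, (w j * m'.1, m'.2) = m := by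
  simp only [monomials, Multiset.mem_sum, Finset.mem_univ, true_and, Multiset.mem_map]

lemma mem_indicators_of_mem_monomial {S : SPN N} {m : Monomial N} (hm : m ∈ S.monomials)
    {p : Fin N × Bool} (hp : p ∈ m.2) : p ∈ S.indicators := by
  induction S generalizing m with
  | leaf i b =>
    rw [monomials, Multiset.mem_singleton] at hm
    simpa [indicators, hm] using hp
  | sum k w ch ih =>
    obtain ⟨j, m', hm', rfl⟩ := mem_monomials_sum.1 hm
    exact Finset.mem_biUnion.2 ⟨j, Finset.mem_univ _, ih j hm' hp⟩
  | prod k ch ih =>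
    obtain ⟨s, hs, ms, hms, hp⟩ := exists_mem_of_mem_foldr_mulMono hm hp
    obtain ⟨j, rfl⟩ := List.mem_ofFn.1 hs
    exact Finset.mem_biUnion.2 ⟨j, Finset.mem_univ _, ih j hms hp⟩

lemma exists_indicator_of_mem_scope {S : SPN N} {X : Fin N} (hX : X ∈ S.scope) :
    ∃ b, (X, b) ∈ S.indicators := by
  induction S with
  | leaf i b =>
    rw [scope, Finset.mem_singleton] at hX
    exact ⟨b, by simp [indicators, hX]⟩
  | sum k w ch ih | prod k ch ih =>
    obtain ⟨j, -, hXj⟩ := Finset.mem_biUnion.1 hX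
    obtain ⟨b, hb⟩ := ih j hXj
    exact ⟨b, Finset.mem_biUnion.2 ⟨j, Finset.mem_univ _, hb⟩⟩

lemma exists_indicator_mem_monomial {S : SPN N} (hc : S.complete) {m : Monomial N}
    (hm : m ∈ S.monomials) {X : Fin N} (hX : X ∈ S.scope) : ∃ b, (X, b) ∈ m.2 := by
  induction S generalizing m with
  | leaf i b =>
    rw [monomials, Multiset.mem_singleton] at hm
    rw [scope, Finset.mem_singleton] at hX
    exact ⟨b, by simp [hm, hX]⟩
  | sum k w ch ih =>
    obtain ⟨j, m', hm', rfl⟩ := mem_monomials_sum.1 hm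
    obtain ⟨j₀, -, hXj₀⟩ := Finset.mem_biUnion.1 hX
    exact ih j (hc.2 j) (m := m') hm' (hc.1 j j₀ ▸ hXj₀)
  | prod k ch ih =>
    obtain ⟨j, -, hXj⟩ := Finset.mem_biUnion.1 hX
    obtain ⟨ms, hms, hle⟩ := exists_le_of_mem_foldr_mulMono hm (List.mem_ofFn.2 ⟨j, rfl⟩)
    obtain ⟨b, hb⟩ := ih j (hc j) hms hXj
    exact ⟨b, Multiset.mem_of_le hle hb⟩

lemma indicator_mem_monomial_of_forall_indicators_eq {S : SPN N} (hc : S.complete)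
    {X : Fin N} (hX : X ∈ S.scope) {b : Bool} (hb : ∀ b', (X, b') ∈ S.indicators → b' = b)
    {m : Monomial N} (hm : m ∈ S.monomials) : (X, b) ∈ m.2 := by
  obtain ⟨b', hb'⟩ := exists_indicator_mem_monomial hc hm hX
  rwa [← hb b' (mem_indicators_of_mem_monomial hm hb')]

lemma consistent.eq_of_mem_indicators {k : ℕ} {ch : Fin k → SPN N}
    (hcons : (prod k ch).consistent) {i j : Fin k} (hij : i ≠ j) {X : Fin N} {b b' : Bool}
    (hb : (X, b) ∈ (ch i).indicators) (hb' : (X, b') ∈ (ch j).indicators) : b = b' := by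
  cases b <;> cases b'
  · rfl
  · exact (hcons.1 j i X hij.symm hb' hb).elim
  · exact (hcons.1 i j X hij hb hb').elim
  · rfl

lemma consistent.exists_forall_indicators_eq {k : ℕ} {ch : Fin k → SPN N}
    (hcons : (prod k ch).consistent) {i j : Fin k} (hij : i ≠ j) {X : Fin N}
    (hXi : X ∈ (ch i).scope) (hXj : X ∈ (ch j).scope) :
    ∃ b, (∀ b', (X, b') ∈ (ch i).indicators → b' = b) ∧
      ∀ b', (X, b') ∈ (ch j).indicators → b' = b := by
  obtain ⟨bi, hbi⟩ := exists_indicator_of_mem_scope hXi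
  obtain ⟨bj, hbj⟩ := exists_indicator_of_mem_scope hXj
  refine ⟨bj, fun b' hb' => hcons.eq_of_mem_indicators hij hb' hbj, fun b' hb' => ?_⟩
  rw [← hcons.eq_of_mem_indicators hij hbi hb', hcons.eq_of_mem_indicators hij hbi hbj]

end SPN

/-- Let `S` be a complete and consistent SPN whose root is a
product node with children `ch`.  If a variable `X` lies in
`scope (ch i) ∩ scope (ch j)` for some `i ≠ j`, then there is a single value
`b` of `X` such that every monomial in the expanded form of `f_{ch i}` and
every monomial in the expanded form of `f_{ch j}` contains the indicator
`I[X = b]`. -/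
theorem spn_shared_variable_common_indicator {N k : ℕ} (ch : Fin k → SPN N)
    (hc : (SPN.prod k ch).complete) (hcons : (SPN.prod k ch).consistent)
    (i j : Fin k) (hij : i ≠ j) (X : Fin N)
    (hXi : X ∈ (ch i).scope) (hXj : X ∈ (ch j).scope) :
    ∃ b : Bool,
      (∀ m ∈ (ch i).monomials, (X, b) ∈ m.2) ∧
      (∀ m ∈ (ch j).monomials, (X, b) ∈ m.2) := by
  obtain ⟨b, hbi, hbj⟩ := hcons.exists_forall_indicators_eq hij hXi hXj
  exact ⟨b, fun _ hm => SPN.indicator_mem_monomial_of_forall_indicators_eq (hc i) hXi hbi hm,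
    fun _ hm => SPN.indicator_mem_monomial_of_forall_indicators_eq (hc j) hXj hbj hm⟩
end
end

section
/- For any complete and consistent SPN S there exists a normal SPN S' with Pr_{S'} = Pr_S and |S'| = O(|S|^2), where a normal SPN is one that is (1) complete and decomposable, (2) weight-normalized at every sum node, and (3) has every terminal node a univariate distribution over a Boolean variable and every sum node of scope size at least 2. -/
/-!
Normalize bottom-up, carrying a set `V` of variables whose indicators have been set to `1`
(`eraseVars`). A node over at most one variable is replaced by a stump for its distribution. A sum
node keeps its children and reweights child `j` by `w j * Z j / Z`, where `Z` and `Z j` are the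
normalizing constants (`val`); as `Z = ∑ j, w j * Z j` for a complete sum, the new weights sum to
`1`. A product in a consistent SPN can fail to be decomposable only on variables shared by several
children. Consistency gives each such variable `X` a single polarity `b`, and completeness shows
that the product equals `∏ I[X = b]` times the product of the children with these indicators set
to `1`. The indicators become stumps and the children are normalized with the shared variables
erased, so the new product is decomposable; normalizing constants multiply over decomposable
products, so the distribution is preserved. Every node gains at most a stump per variable of its
scope, whence the quadratic size bound.
-/

noncomputable section

open Finset

lemma sum_mul_sum_of_dependsOn {ι α R : Type*} [Fintype ι] [DecidableEq ι] [Fintype α]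
    [CommSemiring R] {f g : (ι → α) → R} {s t : Finset ι} (hf : DependsOn f s)
    (hg : DependsOn g t) (hst : Disjoint s t) :
    (∑ x, f x) * ∑ y, g y = Fintype.card (ι → α) * ∑ x, f x * g x := by
  -- exchanging the coordinates in `s` between `x` and `y` gathers everything `f` and `g` read
  -- into the first component
  let swap : (ι → α) × (ι → α) ≃ (ι → α) × (ι → α) :=
    { toFun := fun p => (s.piecewise p.1 p.2, s.piecewise p.2 p.1)
      invFun := fun p => (s.piecewise p.1 p.2, s.piecewise p.2 p.1)
      left_inv := fun p => by ext i <;> by_cases hi : i ∈ s <;> simp [hi]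
      right_inv := fun p => by ext i <;> by_cases hi : i ∈ s <;> simp [hi] }
  have hswap : ∀ p, f p.1 * g p.2 = f (swap p).1 * g (swap p).1 := by
    intro p
    congr 1
    · exact hf fun i hi => (s.piecewise_eq_of_mem _ _ hi).symm
    · refine hg fun i hi => ?_
      have : i ∉ s := disjoint_right.mp hst hi
      simp [swap, this]
  calc (∑ x, f x) * ∑ y, g y = ∑ p : (ι → α) × (ι → α), f p.1 * g p.2 := by
        rw [sum_mul_sum, ← Fintype.sum_prod_type']
    _ = ∑ p : (ι → α) × (ι → α), f (swap p).1 * g (swap p).1 :=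
        sum_congr rfl fun p _ => hswap p
    _ = ∑ p : (ι → α) × (ι → α), f p.1 * g p.1 := swap.sum_comp fun p => f p.1 * g p.1
    _ = Fintype.card (ι → α) * ∑ x, f x * g x := by
        rw [Fintype.sum_prod_type, mul_sum]
        simp only [sum_const, card_univ, nsmul_eq_mul]

@[to_additive]
lemma prod_orderEmbOfFin {α M : Type*} [LinearOrder α] [CommMonoid M] (s : Finset α)
    (g : α → M) : ∏ m, g (s.orderEmbOfFin rfl m) = ∏ a ∈ s, g a := by
  conv_rhs => rw [← map_orderEmbOfFin_univ s rfl, prod_map]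
  rfl

lemma eq_singleton_min'_of_card_le_one {α : Type*} [LinearOrder α] {s : Finset α}
    (hs : s.card ≤ 1) (h : s.Nonempty) : s = {s.min' h} :=
  eq_singleton_iff_unique_mem.mpr
    ⟨min'_mem _ _, fun _ hy => card_le_one.mp hs _ hy _ (min'_mem _ _)⟩

/-- The uniform fallback is used only where the normalizing constant vanishes, where it merely
keeps the weights a probability vector. -/
def normalizeWeights {ι : Type*} [Fintype ι] (v : ι → ℝ) : ι → ℝ :=
  if ∑ i, v i = 0 then fun _ => (Fintype.card ι : ℝ)⁻¹ else fun i => v i / ∑ j, v j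

section normalizeWeights

variable {ι : Type*} [Fintype ι] {v : ι → ℝ}

lemma normalizeWeights_of_sum_ne_zero (h : ∑ i, v i ≠ 0) (i : ι) :
    normalizeWeights v i = v i / ∑ j, v j := by
  simp [normalizeWeights, h]

lemma normalizeWeights_nonneg (hv : ∀ i, 0 ≤ v i) (i : ι) : 0 ≤ normalizeWeights v i := by
  unfold normalizeWeights
  split
  · positivity
  · exact div_nonneg (hv i) (sum_nonneg fun j _ => hv j)

lemma sum_normalizeWeights [Nonempty ι] (v : ι → ℝ) : ∑ i, normalizeWeights v i = 1 := by
  unfold normalizeWeights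
  split
  · simp
  · rw [← sum_div, div_self ‹_›]

end normalizeWeights

namespace SPN

variable {N : ℕ}

lemma size_pos (S : SPN N) : 0 < S.size := by
  cases S <;> simp only [size] <;> omega

lemma eval_nonneg {S : SPN N} (h : S.nonnegWeights) (x : Fin N → Bool) : 0 ≤ S.eval x := by
  induction S with
  | leaf i b => simp only [eval]; split <;> norm_num
  | sum k w ch ih => exact sum_nonneg fun j _ => mul_nonneg (h.1 j) (ih j (h.2 j))
  | prod k ch ih => exact prod_nonneg fun j _ => ih j (h j)

lemma dependsOn_eval (S : SPN N) : DependsOn S.eval S.scope := by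
  intro x y h
  induction S with
  | leaf i b => simp_all [eval, scope]
  | sum k w ch ih =>
      refine sum_congr rfl fun j _ => congrArg _ (ih j fun i hi => h i ?_)
      simp only [scope, coe_biUnion]
      exact Set.mem_biUnion (mem_univ j) hi
  | prod k ch ih =>
      refine prod_congr rfl fun j _ => ih j fun i hi => h i ?_
      simp only [scope, coe_biUnion]
      exact Set.mem_biUnion (mem_univ j) hi

lemma scope_eq_image_indicators (S : SPN N) : S.scope = S.indicators.image Prod.fst := by
  induction S with
  | leaf i b => simp [scope, indicators]
  | sum k w ch ih => simp only [scope, indicators, biUnion_image, ih]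
  | prod k ch ih => simp only [scope, indicators, biUnion_image, ih]

lemma card_scope_le_size (S : SPN N) : S.scope.card ≤ S.size := by
  induction S with
  | leaf i b => simp [scope, size]
  | sum k w ch ih =>
      simp only [scope, size]
      exact card_biUnion_le.trans ((sum_le_sum fun j _ => ih j).trans (Nat.le_add_left _ _))
  | prod k ch ih =>
      simp only [scope, size]
      exact card_biUnion_le.trans ((sum_le_sum fun j _ => ih j).trans (Nat.le_add_left _ _))

/-- In a complete SPN every monomial mentions every variable of the scope. -/
lemma eval_eq_zero_of_complete {S : SPN N} (hc : S.complete) {X : Fin N} (hX : X ∈ S.scope)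
    {x : Fin N → Bool} (hx : (X, x X) ∉ S.indicators) : S.eval x = 0 := by
  induction S with
  | leaf i b =>
      simp only [scope, mem_singleton] at hX
      subst hX
      simp_all [indicators, eval]
  | sum k w ch ih =>
      simp only [scope, mem_biUnion, mem_univ, true_and] at hX
      obtain ⟨j₀, hj₀⟩ := hX
      refine sum_eq_zero fun j _ => ?_
      rw [ih j (hc.2 j) (hc.1 j j₀ ▸ hj₀) fun h => hx ?_, mul_zero]
      simp only [indicators, mem_biUnion, mem_univ, true_and]
      exact ⟨j, h⟩
  | prod k ch ih =>
      simp only [scope, mem_biUnion, mem_univ, true_and] at hX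
      obtain ⟨j, hj⟩ := hX
      refine prod_eq_zero (mem_univ j) (ih j (hc j) hj fun h => hx ?_)
      simp only [indicators, mem_biUnion, mem_univ, true_and]
      exact ⟨j, h⟩

lemma scope_sum_eq_scope_child {k : ℕ} {w : Fin k → ℝ} {ch : Fin k → SPN N}
    (hs : ∀ i j, (ch i).scope = (ch j).scope) (j : Fin k) :
    (sum k w ch).scope = (ch j).scope := by
  ext X
  simp only [scope, mem_biUnion, mem_univ, true_and]
  exact ⟨fun ⟨i, hi⟩ => hs i j ▸ hi, fun hj => ⟨j, hj⟩⟩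

/-- `val` sums over the assignments of the scope only; summing over all assignments counts each
of them once for every choice of the `N - |scope|` remaining variables. -/
lemma two_pow_card_scope_mul_sum_eval (S : SPN N) :
    2 ^ S.scope.card * ∑ x, S.eval x = 2 ^ N * S.val := by
  classical
  have hcard : S.scope.card + Fintype.card {i // i ∉ S.scope} = N := by
    rw [Fintype.card_subtype_compl, Fintype.card_coe, Fintype.card_fin]
    have := card_le_univ S.scope
    simp only [Fintype.card_fin] at this
    omega
  have hsplit : ∑ x, S.eval x = 2 ^ Fintype.card {i // i ∉ S.scope} * S.val := by
    rw [← (Equiv.piEquivPiSubtypeProd (· ∈ S.scope) fun _ => Bool).symm.sum_comp,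
      Fintype.sum_prod_type, val, mul_sum]
    refine sum_congr rfl fun y _ => ?_
    have hext : ∀ z, S.eval ((Equiv.piEquivPiSubtypeProd (· ∈ S.scope) fun _ => Bool).symm
        (y, z)) = S.eval (S.extendScope y) := fun z =>
      S.dependsOn_eval fun i hi => by simp [extendScope, Finset.mem_coe.mp hi]
    simp only [hext, sum_const, card_univ, Fintype.card_fun, Fintype.card_bool, nsmul_eq_mul]
    push_cast
    ring
  rw [hsplit, ← mul_assoc, ← pow_add, hcard]

lemma val_nonneg {S : SPN N} (h : S.nonnegWeights) : 0 ≤ S.val :=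
  sum_nonneg fun _ _ => eval_nonneg h _

lemma eval_eq_zero_of_val_eq_zero {S : SPN N} (h : S.nonnegWeights) (hv : S.val = 0)
    (x : Fin N → Bool) : S.eval x = 0 := by
  have hsum : ∑ y, S.eval y = 0 := by
    have := S.two_pow_card_scope_mul_sum_eval
    rw [hv, mul_zero] at this
    exact (mul_eq_zero.mp this).resolve_left (by positivity)
  exact (sum_eq_zero_iff_of_nonneg fun y _ => eval_nonneg h y).mp hsum x (mem_univ x)

lemma val_eq_eval_of_scope_eq_empty {S : SPN N} (h : S.scope = ∅) (x : Fin N → Bool) :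
    S.val = S.eval x := by
  have : IsEmpty {i // i ∈ S.scope} := ⟨fun i => by simpa [h] using i.2⟩
  rw [val, Fintype.sum_unique]
  exact S.dependsOn_eval fun i hi => by simp [h] at hi

lemma val_eq_of_scope_eq_singleton {S : SPN N} {X : Fin N} (h : S.scope = {X}) :
    S.val = S.eval (fun _ => true) + S.eval (fun _ => false) := by
  have : Unique {i // i ∈ S.scope} :=
    ⟨⟨⟨X, by simp [h]⟩⟩, fun i => Subtype.ext (by simpa [h] using i.2)⟩
  rw [val, ← (Equiv.funUnique {i // i ∈ S.scope} Bool).symm.sum_comp, Fintype.sum_bool]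
  congr 1 <;> exact S.dependsOn_eval fun i hi => by simp [extendScope, Finset.mem_coe.mp hi]

lemma val_leaf (i : Fin N) (b : Bool) : (leaf i b).val = 1 := by
  rw [val_eq_of_scope_eq_singleton (X := i) rfl]
  cases b <;> simp [eval]

lemma val_eq_mul {U S T : SPN N} (hd : Disjoint S.scope T.scope)
    (hs : U.scope = S.scope ∪ T.scope) (he : ∀ x, U.eval x = S.eval x * T.eval x) :
    U.val = S.val * T.val := by
  classical
  have hST := sum_mul_sum_of_dependsOn S.dependsOn_eval T.dependsOn_eval hd
  rw [Fintype.card_fun, Fintype.card_bool, Fintype.card_fin] at hST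
  push_cast at hST
  have hU := U.two_pow_card_scope_mul_sum_eval
  rw [hs, card_union_of_disjoint hd, sum_congr rfl fun x _ => he x, pow_add] at hU
  have key : (2 : ℝ) ^ N * 2 ^ N * U.val = 2 ^ N * 2 ^ N * (S.val * T.val) := by
    calc (2 : ℝ) ^ N * 2 ^ N * U.val
        = 2 ^ N * (2 ^ S.scope.card * 2 ^ T.scope.card * ∑ x, S.eval x * T.eval x) := by
          rw [mul_assoc, ← hU]
      _ = (2 ^ S.scope.card * ∑ x, S.eval x) * (2 ^ T.scope.card * ∑ x, T.eval x) := by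
          linear_combination (-2 ^ S.scope.card * 2 ^ T.scope.card : ℝ) * hST
      _ = 2 ^ N * 2 ^ N * (S.val * T.val) := by
          rw [two_pow_card_scope_mul_sum_eval, two_pow_card_scope_mul_sum_eval]
          ring
  exact mul_left_cancel₀ (by positivity) key

lemma val_prod {k : ℕ} (ch : Fin k → SPN N)
    (hd : ∀ i j, i ≠ j → Disjoint (ch i).scope (ch j).scope) :
    (prod k ch).val = ∏ j, (ch j).val := by
  induction k with
  | zero =>
      simp [val_eq_eval_of_scope_eq_empty (S := prod 0 ch) (by simp [scope]) fun _ => true, eval]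
  | succ k ih =>
      rw [Fin.prod_univ_succ, ← ih _ fun i j hij => hd _ _ (Fin.succ_injective _ |>.ne hij)]
      refine val_eq_mul ?_ ?_ fun x => by simp [eval, Fin.prod_univ_succ]
      · simp only [scope, disjoint_biUnion_right]
        exact fun j _ => hd 0 j.succ (Fin.succ_ne_zero j).symm
      · ext i
        simp [scope, Fin.exists_fin_succ]

lemma val_sum {k : ℕ} (w : Fin k → ℝ) (ch : Fin k → SPN N)
    (hs : ∀ i j, (ch i).scope = (ch j).scope) :
    (sum k w ch).val = ∑ j, w j * (ch j).val := by
  have key : (2 : ℝ) ^ N * (sum k w ch).val = 2 ^ N * ∑ j, w j * (ch j).val := by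
    calc (2 : ℝ) ^ N * (sum k w ch).val
        = 2 ^ (sum k w ch).scope.card * ∑ x, ∑ j, w j * (ch j).eval x :=
          (two_pow_card_scope_mul_sum_eval _).symm
      _ = ∑ j, w j * (2 ^ (ch j).scope.card * ∑ x, (ch j).eval x) := by
          rw [sum_comm, mul_sum]
          refine sum_congr rfl fun j _ => ?_
          rw [scope_sum_eq_scope_child hs j, mul_sum, mul_sum, mul_sum]
          exact sum_congr rfl fun x _ => by ring
      _ = 2 ^ N * ∑ j, w j * (ch j).val := by
          rw [mul_sum]
          exact sum_congr rfl fun j _ => by rw [two_pow_card_scope_mul_sum_eval]; ring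
  exact mul_left_cancel₀ (by positivity) key

lemma Pr_eq_mul {U S T : SPN N} (hd : Disjoint S.scope T.scope)
    (hs : U.scope = S.scope ∪ T.scope) (he : ∀ x, U.eval x = S.eval x * T.eval x)
    (x : Fin N → Bool) : U.Pr x = S.Pr x * T.Pr x := by
  rw [Pr, Pr, Pr, he, val_eq_mul hd hs he, mul_div_mul_comm]

lemma Pr_prod {k : ℕ} (ch : Fin k → SPN N)
    (hd : ∀ i j, i ≠ j → Disjoint (ch i).scope (ch j).scope) (x : Fin N → Bool) :
    (prod k ch).Pr x = ∏ j, (ch j).Pr x := by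
  rw [Pr, val_prod ch hd, eval, ← prod_div_distrib]
  rfl

lemma Pr_sum {k : ℕ} (w : Fin k → ℝ) (ch : Fin k → SPN N)
    (hs : ∀ i j, (ch i).scope = (ch j).scope) (hn : ∀ j, (ch j).nonnegWeights)
    (hv : 0 < (sum k w ch).val) (x : Fin N → Bool) :
    (sum k w ch).Pr x = ∑ j, normalizeWeights (fun j => w j * (ch j).val) j * (ch j).Pr x := by
  have hval := val_sum w ch hs
  rw [Pr, eval, sum_div]
  refine sum_congr rfl fun j _ => ?_
  rw [normalizeWeights_of_sum_ne_zero (hval ▸ hv.ne'), ← hval, Pr]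
  -- a child with vanishing normalizing constant has vanishing polynomial
  rcases (val_nonneg (hn j)).lt_or_eq with hj | hj
  · field_simp
  · rw [← hj, eval_eq_zero_of_val_eq_zero (hn j) hj.symm x]
    simp

lemma Pr_eq_of_eval_eq_Pr {S T : SPN N} (hs : T.scope = S.scope) (he : ∀ x, T.eval x = S.Pr x)
    (hv : 0 < S.val) : T.Pr = S.Pr := by
  have key : (2 : ℝ) ^ N * T.val = 2 ^ N * 1 := by
    rw [← two_pow_card_scope_mul_sum_eval, hs, sum_congr rfl fun x _ => he x]
    unfold Pr
    rw [← sum_div, ← mul_div_assoc, two_pow_card_scope_mul_sum_eval, mul_div_assoc,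
      div_self hv.ne']
  funext x
  rw [Pr, mul_left_cancel₀ (by positivity) key, div_one, he]

lemma normal_prod {k : ℕ} {ch : Fin k → SPN N} (h : ∀ j, (ch j).normal)
    (hd : ∀ i j, i ≠ j → Disjoint (ch i).scope (ch j).scope) : (prod k ch).normal :=
  ⟨fun j => (h j).1, ⟨hd, fun j => (h j).2.1⟩, fun j => (h j).2.2.1, fun j => (h j).2.2.2⟩

lemma normal_sum {k : ℕ} {w : Fin k → ℝ} {ch : Fin k → SPN N} (h : ∀ j, (ch j).normal)
    (hs : ∀ i j, (ch i).scope = (ch j).scope) (hw : ∀ j, 0 ≤ w j) (hw₁ : ∑ j, w j = 1)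
    (h₂ : 2 ≤ (sum k w ch).scope.card) : (sum k w ch).normal :=
  ⟨⟨hs, fun j => (h j).1⟩, fun j => (h j).2.1, ⟨hw, hw₁, fun j => (h j).2.2.1⟩,
    Or.inr ⟨h₂, fun j => (h j).2.2.2⟩⟩

section prodTwo

variable (A B : SPN N)

lemma eval_prod_two (x : Fin N → Bool) : (prod 2 ![A, B]).eval x = A.eval x * B.eval x := by
  simp [eval, Fin.prod_univ_two]

lemma scope_prod_two : (prod 2 ![A, B]).scope = A.scope ∪ B.scope := by
  ext X
  simp [scope, Fin.exists_fin_two]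

lemma size_prod_two : (prod 2 ![A, B]).size = 3 + A.size + B.size := by
  simp only [size, Fin.sum_univ_two, Matrix.cons_val_zero, Matrix.cons_val_one]
  ring

variable {A B}

lemma normal_prod_two (hA : A.normal) (hB : B.normal) (hd : Disjoint A.scope B.scope) :
    (prod 2 ![A, B]).normal := by
  refine normal_prod (fun j => by fin_cases j <;> assumption) fun i j hij => ?_
  fin_cases i <;> fin_cases j
  all_goals first | exact absurd rfl hij | simpa using hd | simpa using hd.symm

end prodTwo

def one : SPN N := .prod 0 ![]

@[simp] lemma eval_one (x : Fin N → Bool) : (one : SPN N).eval x = 1 := by simp [one, eval]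

@[simp] lemma scope_one : (one : SPN N).scope = ∅ := by simp [one, scope]

@[simp] lemma size_one : (one : SPN N).size = 1 := by simp [one, size]

lemma normal_one : (one : SPN N).normal := normal_prod (fun j => j.elim0) fun i => i.elim0

def stump (X : Fin N) (p : Fin 2 → ℝ) : SPN N := .sum 2 p ![.leaf X true, .leaf X false]

section stump

variable (X : Fin N) (p : Fin 2 → ℝ)

lemma eval_stump (x : Fin N → Bool) : (stump X p).eval x = if x X then p 0 else p 1 := by
  cases h : x X <;> simp [stump, eval, h]

lemma scope_stump : (stump X p).scope = {X} := by
  ext i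
  simp [stump, scope, Fin.exists_fin_two]

lemma size_stump : (stump X p).size = 5 := by
  simp [stump, size]

variable {p}

lemma normal_stump (hp : ∀ j, 0 ≤ p j) (hp₁ : p 0 + p 1 = 1) : (stump X p).normal := by
  refine ⟨⟨fun i j => ?_, fun j => ?_⟩, fun j => ?_, ⟨hp, by simpa using hp₁, fun j => ?_⟩,
    Or.inl ⟨⟨X, rfl, rfl⟩, hp 0, hp 1, hp₁⟩⟩ <;> fin_cases j <;> try fin_cases i
  all_goals simp [scope, complete, decomposable, weightNormalized]

end stump

/-- The distribution of an SPN over at most one variable, written as a stump (or as `one` when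
there is no variable). -/
def stumpOf (T : SPN N) : SPN N :=
  if h : T.scope.Nonempty then
    stump (T.scope.min' h) (normalizeWeights ![T.eval fun _ => true, T.eval fun _ => false])
  else one

section stumpOf

variable {T : SPN N}

lemma scope_stumpOf (hT : T.scope.card ≤ 1) : (stumpOf T).scope = T.scope := by
  unfold stumpOf
  split_ifs with h
  · rw [scope_stump, ← eq_singleton_min'_of_card_le_one hT h]
  · rw [scope_one, not_nonempty_iff_eq_empty.mp h]

lemma size_stumpOf_le (T : SPN N) : (stumpOf T).size ≤ 5 := by
  unfold stumpOf
  split_ifs <;> simp [size_stump]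

lemma normal_stumpOf (hT : T.nonnegWeights) : (stumpOf T).normal := by
  unfold stumpOf
  split_ifs
  · refine normal_stump _ (normalizeWeights_nonneg fun j => ?_) ?_
    · fin_cases j <;> exact eval_nonneg hT _
    · simpa using sum_normalizeWeights ![T.eval fun _ => true, T.eval fun _ => false]
  · exact normal_one

lemma eval_stumpOf (hT : T.scope.card ≤ 1) (hv : 0 < T.val) (x : Fin N → Bool) :
    (stumpOf T).eval x = T.Pr x := by
  unfold stumpOf Pr
  split_ifs with h
  · have hX := eq_singleton_min'_of_card_le_one hT h
    rw [val_eq_of_scope_eq_singleton hX] at hv ⊢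
    have hsum : ∑ j, ![T.eval fun _ => true, T.eval fun _ => false] j ≠ 0 := by
      simpa using hv.ne'
    rw [eval_stump, normalizeWeights_of_sum_ne_zero hsum, normalizeWeights_of_sum_ne_zero hsum]
    simp only [Fin.sum_univ_two, Matrix.cons_val_zero, Matrix.cons_val_one]
    split_ifs with hx <;> congr 1 <;> refine T.dependsOn_eval fun i hi => ?_ <;>
      obtain rfl := mem_singleton.mp (hX ▸ hi)
    · exact hx.symm
    · exact (Bool.eq_false_iff.mpr hx).symm
  · rw [val_eq_eval_of_scope_eq_empty (not_nonempty_iff_eq_empty.mp h) x] at hv ⊢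
    rw [eval_one]
    exact (div_self hv.ne').symm

lemma scope_stumpOf_leaf (X : Fin N) (b : Bool) : (stumpOf (leaf X b)).scope = {X} :=
  scope_stumpOf (by simp [scope])

end stumpOf

def prodOver (s : Finset (Fin N)) (f : Fin N → SPN N) : SPN N :=
  .prod s.card fun m => f (s.orderEmbOfFin rfl m)

section prodOver

variable (s : Finset (Fin N)) {f : Fin N → SPN N}

lemma eval_prodOver (x : Fin N → Bool) : (prodOver s f).eval x = ∏ X ∈ s, (f X).eval x :=
  prod_orderEmbOfFin s fun X => (f X).eval x

lemma size_prodOver : (prodOver s f).size = 1 + s.card + ∑ X ∈ s, (f X).size := by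
  rw [prodOver, size, ← sum_orderEmbOfFin s fun X => (f X).size]

lemma disjoint_scope_prodOver (hf : ∀ X, (f X).scope = {X}) {i j : Fin s.card}
    (hij : i ≠ j) :
    Disjoint (f (s.orderEmbOfFin rfl i)).scope (f (s.orderEmbOfFin rfl j)).scope := by
  simpa [hf] using (s.orderEmbOfFin rfl).injective.ne hij

lemma scope_prodOver (hf : ∀ X, (f X).scope = {X}) : (prodOver s f).scope = s := by
  ext X
  simp only [prodOver, scope, hf, mem_biUnion, mem_univ, mem_singleton, true_and]
  rw [← Finset.mem_coe, ← range_orderEmbOfFin s rfl, Set.mem_range]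
  simp [eq_comm]

lemma normal_prodOver (hf : ∀ X, (f X).scope = {X}) (hn : ∀ X, (f X).normal) :
    (prodOver s f).normal :=
  normal_prod (fun _ => hn _) fun _ _ => disjoint_scope_prodOver s hf

lemma val_prodOver (hf : ∀ X, (f X).scope = {X}) :
    (prodOver s f).val = ∏ X ∈ s, (f X).val := by
  rw [prodOver, val_prod _ (fun _ _ => disjoint_scope_prodOver s hf)]
  exact prod_orderEmbOfFin s fun X => (f X).val

lemma Pr_prodOver (hf : ∀ X, (f X).scope = {X}) (x : Fin N → Bool) :
    (prodOver s f).Pr x = ∏ X ∈ s, (f X).Pr x := by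
  rw [prodOver, Pr_prod _ (fun _ _ => disjoint_scope_prodOver s hf)]
  exact prod_orderEmbOfFin s fun X => (f X).Pr x

end prodOver

def eraseVars (V : Finset (Fin N)) : SPN N → SPN N
  | .leaf i b => if i ∈ V then one else .leaf i b
  | .sum k w ch => .sum k w fun j => eraseVars V (ch j)
  | .prod k ch => .prod k fun j => eraseVars V (ch j)

section eraseVars

variable (V W : Finset (Fin N)) {S : SPN N}

lemma eraseVars_empty (S : SPN N) : eraseVars ∅ S = S := by
  induction S with
  | leaf i b => simp [eraseVars]
  | sum k w ch ih => simp [eraseVars, ih]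
  | prod k ch ih => simp [eraseVars, ih]

@[simp] lemma eraseVars_one : eraseVars V (one : SPN N) = one := by
  simp only [one, eraseVars]
  exact congrArg _ (funext fun j => j.elim0)

lemma eraseVars_eraseVars (S : SPN N) :
    eraseVars W (eraseVars V S) = eraseVars (V ∪ W) S := by
  induction S with
  | leaf i b => by_cases hV : i ∈ V <;> by_cases hW : i ∈ W <;> simp [eraseVars, hV, hW]
  | sum k w ch ih => simp [eraseVars, ih]
  | prod k ch ih => simp [eraseVars, ih]

lemma indicators_eraseVars (S : SPN N) :
    (eraseVars V S).indicators = S.indicators.filter (·.1 ∉ V) := by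
  induction S with
  | leaf i b => by_cases hV : i ∈ V <;> simp [eraseVars, hV, one, indicators, filter_singleton]
  | sum k w ch ih => simp [eraseVars, indicators, ih, filter_biUnion]
  | prod k ch ih => simp [eraseVars, indicators, ih, filter_biUnion]

lemma scope_eraseVars (S : SPN N) : (eraseVars V S).scope = S.scope \ V := by
  ext i
  simp [scope_eq_image_indicators, indicators_eraseVars]

lemma card_scope_eraseVars_leaf_le (i : Fin N) (b : Bool) :
    (eraseVars V (leaf i b)).scope.card ≤ 1 := by
  rw [scope_eraseVars]
  exact (card_le_card sdiff_subset).trans (by simp [scope])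

lemma complete_eraseVars (h : S.complete) : (eraseVars V S).complete := by
  induction S with
  | leaf i b => by_cases hV : i ∈ V <;> simp [eraseVars, hV, complete, one]
  | sum k w ch ih =>
      exact ⟨fun i j => by simp only [scope_eraseVars, h.1 i j], fun j => ih j (h.2 j)⟩
  | prod k ch ih => exact fun j => ih j (h j)

lemma nonnegWeights_eraseVars (h : S.nonnegWeights) : (eraseVars V S).nonnegWeights := by
  induction S with
  | leaf i b => by_cases hV : i ∈ V <;> simp [eraseVars, hV, nonnegWeights, one]
  | sum k w ch ih => exact ⟨h.1, fun j => ih j (h.2 j)⟩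
  | prod k ch ih => exact fun j => ih j (h j)

lemma consistent_eraseVars (h : S.consistent) : (eraseVars V S).consistent := by
  induction S with
  | leaf i b => by_cases hV : i ∈ V <;> simp [eraseVars, hV, consistent, one]
  | sum k w ch ih => exact fun j => ih j (h j)
  | prod k ch ih =>
      refine ⟨fun i j X hij hi hj => h.1 i j X hij ?_ ?_, fun j => ih j (h.2 j)⟩
      · exact (mem_filter.mp (indicators_eraseVars V _ ▸ hi)).1
      · exact (mem_filter.mp (indicators_eraseVars V _ ▸ hj)).1

lemma eval_eraseVars_of_agree {x : Fin N → Bool}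
    (h : ∀ p ∈ S.indicators, p.1 ∈ V → x p.1 = p.2) :
    (eraseVars V S).eval x = S.eval x := by
  induction S with
  | leaf i b =>
      by_cases hV : i ∈ V
      · simp [eraseVars, hV, eval, h (i, b) (by simp [indicators]) hV]
      · simp [eraseVars, hV]
  | sum k w ch ih =>
      refine sum_congr rfl fun j _ => congrArg _ (ih j fun p hp => h p ?_)
      simp only [indicators, mem_biUnion, mem_univ, true_and]
      exact ⟨j, hp⟩
  | prod k ch ih =>
      refine prod_congr rfl fun j _ => ih j fun p hp => h p ?_
      simp only [indicators, mem_biUnion, mem_univ, true_and]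
      exact ⟨j, hp⟩

end eraseVars

def sharedVars {k : ℕ} (c : Fin k → SPN N) : Finset (Fin N) :=
  univ.filter fun X => ∃ i j, i ≠ j ∧ X ∈ (c i).scope ∧ X ∈ (c j).scope

def polarity (S : SPN N) (X : Fin N) : Bool := decide ((X, true) ∈ S.indicators)

section sharedVars

variable {k : ℕ} (c : Fin k → SPN N)

lemma mem_sharedVars {X : Fin N} :
    X ∈ sharedVars c ↔ ∃ i j, i ≠ j ∧ X ∈ (c i).scope ∧ X ∈ (c j).scope := by
  simp [sharedVars]

lemma card_sharedVars_le : (sharedVars c).card ≤ ∑ j, (c j).scope.card := by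
  refine (card_le_card fun X hX => ?_).trans card_biUnion_le
  obtain ⟨i, -, -, hi, -⟩ := (mem_sharedVars c).mp hX
  exact mem_biUnion.mpr ⟨i, mem_univ i, hi⟩

lemma disjoint_scope_eraseVars_sharedVars {i j : Fin k} (hij : i ≠ j) :
    Disjoint (eraseVars (sharedVars c) (c i)).scope (eraseVars (sharedVars c) (c j)).scope := by
  rw [scope_eraseVars, scope_eraseVars, disjoint_left]
  intro X hi hj
  rw [mem_sdiff] at hi hj
  exact hi.2 ((mem_sharedVars c).mpr ⟨i, j, hij, hi.1, hj.1⟩)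

lemma disjoint_sharedVars_scope_prod_eraseVars :
    Disjoint (sharedVars c) (prod k fun j => eraseVars (sharedVars c) (c j)).scope := by
  simp only [scope, disjoint_biUnion_right, scope_eraseVars]
  exact fun j _ => disjoint_sdiff

lemma scope_prod_eq_sharedVars_union :
    (prod k c).scope = sharedVars c ∪ (prod k fun j => eraseVars (sharedVars c) (c j)).scope := by
  ext X
  by_cases hX : X ∈ sharedVars c
  · obtain ⟨i, -, -, hi, -⟩ := (mem_sharedVars c).mp hX
    simpa [scope, hX] using ⟨i, hi⟩
  · simp [scope, hX, scope_eraseVars]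

variable {c}

lemma eq_of_mem_indicators_of_mem_indicators_not (hc : (prod k c).consistent) {X : Fin N}
    {b : Bool} {i j : Fin k} (hi : (X, b) ∈ (c i).indicators)
    (hj : (X, !b) ∈ (c j).indicators) : i = j := by
  by_contra hij
  cases b
  · exact hc.1 j i X (Ne.symm hij) hj hi
  · exact hc.1 i j X hij hi hj

lemma notMem_indicators_not_of_mem_sharedVars (hc : (prod k c).consistent) {X : Fin N}
    (hX : X ∈ sharedVars c) {b : Bool} {i : Fin k} (hi : (X, b) ∈ (c i).indicators)
    (j : Fin k) : (X, !b) ∉ (c j).indicators := by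
  intro hj
  obtain rfl := eq_of_mem_indicators_of_mem_indicators_not hc hi hj
  obtain ⟨d, hdi, hd⟩ : ∃ d, d ≠ i ∧ X ∈ (c d).scope := by
    obtain ⟨a, a', haa', ha, ha'⟩ := (mem_sharedVars c).mp hX
    by_cases hai : a = i
    · exact ⟨a', fun h => haa' (hai.trans h.symm), ha'⟩
    · exact ⟨a, hai, ha⟩
  -- `X` also occurs in the child `d ≠ i`, with a polarity clashing with `hi` or with `hj`
  obtain ⟨⟨_, e⟩, he, rfl⟩ := mem_image.mp (scope_eq_image_indicators (c d) ▸ hd)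
  rcases Bool.eq_or_eq_not e b with rfl | rfl
  · exact hdi (eq_of_mem_indicators_of_mem_indicators_not hc he hj)
  · exact hdi (eq_of_mem_indicators_of_mem_indicators_not hc hi he).symm

lemma eq_polarity_of_mem_sharedVars (hc : (prod k c).consistent) {X : Fin N}
    (hX : X ∈ sharedVars c) {b : Bool} {i : Fin k} (hi : (X, b) ∈ (c i).indicators) :
    b = (prod k c).polarity X := by
  cases b
  · have := fun j => notMem_indicators_not_of_mem_sharedVars hc hX hi j
    simpa [polarity, indicators] using this
  · simpa [polarity, indicators] using ⟨i, hi⟩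

lemma eval_prod_eq_mul_eraseVars_sharedVars (hc : (prod k c).complete)
    (hcons : (prod k c).consistent) (x : Fin N → Bool) :
    (prod k c).eval x = (prodOver (sharedVars c) fun X => leaf X ((prod k c).polarity X)).eval x *
      (prod k fun j => eraseVars (sharedVars c) (c j)).eval x := by
  rw [eval_prodOver]
  by_cases hx : ∀ X ∈ sharedVars c, x X = (prod k c).polarity X
  · rw [prod_eq_one fun X hX => by simp [eval, hx X hX], one_mul]
    refine prod_congr rfl fun j _ => (eval_eraseVars_of_agree _ fun p hp hpT => ?_).symm
    rw [hx p.1 hpT]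
    exact (eq_polarity_of_mem_sharedVars hcons hpT hp).symm
  · push Not at hx
    obtain ⟨X, hX, hxX⟩ := hx
    rw [prod_eq_zero hX (by simp [eval, hxX]), zero_mul]
    obtain ⟨i, -, -, hi, -⟩ := (mem_sharedVars c).mp hX
    exact prod_eq_zero (mem_univ i) (eval_eq_zero_of_complete (hc i) hi
      fun h => hxX (eq_polarity_of_mem_sharedVars hcons hX h))

lemma Pr_prod_eq_mul_eraseVars_sharedVars (hc : (prod k c).complete)
    (hcons : (prod k c).consistent) (x : Fin N → Bool) :
    (prod k c).Pr x = (prodOver (sharedVars c) fun X => leaf X ((prod k c).polarity X)).Pr x *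
      (prod k fun j => eraseVars (sharedVars c) (c j)).Pr x := by
  refine Pr_eq_mul ?_ ?_ (eval_prod_eq_mul_eraseVars_sharedVars hc hcons) x <;>
    rw [scope_prodOver _ fun X => rfl]
  · exact disjoint_sharedVars_scope_prod_eraseVars c
  · exact scope_prod_eq_sharedVars_union c

lemma val_prod_eq_prod_val_eraseVars_sharedVars (hc : (prod k c).complete)
    (hcons : (prod k c).consistent) :
    (prod k c).val = ∏ j, (eraseVars (sharedVars c) (c j)).val := by
  rw [val_eq_mul ?_ ?_ (eval_prod_eq_mul_eraseVars_sharedVars hc hcons),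
    val_prodOver _ fun X => rfl, val_prod _ fun _ _ => disjoint_scope_eraseVars_sharedVars c]
  · simp [val_leaf]
  all_goals rw [scope_prodOver _ fun X => rfl]
  · exact disjoint_sharedVars_scope_prod_eraseVars c
  · exact scope_prod_eq_sharedVars_union c

lemma val_eraseVars_sharedVars_pos (hc : (prod k c).complete) (hcons : (prod k c).consistent)
    (hn : (prod k c).nonnegWeights) (hv : 0 < (prod k c).val) (j : Fin k) :
    0 < (eraseVars (sharedVars c) (c j)).val := by
  rw [val_prod_eq_prod_val_eraseVars_sharedVars hc hcons] at hv
  exact (val_nonneg (nonnegWeights_eraseVars _ (hn j))).lt_of_ne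
    (prod_ne_zero_iff.mp hv.ne' j (mem_univ j)).symm

end sharedVars

def toNormal (V : Finset (Fin N)) : SPN N → SPN N
  | .leaf i b => stumpOf (eraseVars V (.leaf i b))
  | .sum k w ch =>
      if (eraseVars V (.sum k w ch)).scope.card ≤ 1 then stumpOf (eraseVars V (.sum k w ch))
      else .sum k (normalizeWeights fun j => w j * (eraseVars V (ch j)).val)
        fun j => toNormal V (ch j)
  | .prod k ch =>
      .prod 2 ![prodOver (sharedVars fun j => eraseVars V (ch j))
          fun X => stumpOf (.leaf X ((SPN.prod k fun j => eraseVars V (ch j)).polarity X)),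
        .prod k fun j => toNormal (V ∪ sharedVars fun j => eraseVars V (ch j)) (ch j)]

lemma scope_toNormal (V : Finset (Fin N)) (S : SPN N) :
    (toNormal V S).scope = (eraseVars V S).scope := by
  induction S generalizing V with
  | leaf i b => exact scope_stumpOf (card_scope_eraseVars_leaf_le V i b)
  | sum k w ch ih =>
      rw [toNormal]
      split_ifs with h
      · exact scope_stumpOf h
      · simp only [scope, eraseVars, ih]
  | prod k ch ih =>
      rw [toNormal, scope_prod_two, scope_prodOver _ fun X => scope_stumpOf_leaf X _, eraseVars,
        scope_prod_eq_sharedVars_union fun j => eraseVars V (ch j)]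
      simp only [scope, ih, eraseVars_eraseVars]

lemma size_toNormal_le (V : Finset (Fin N)) (S : SPN N) :
    (toNormal V S).size ≤ 7 * S.size ^ 2 := by
  induction S generalizing V with
  | leaf i b => exact (size_stumpOf_le _).trans (by simp [size])
  | sum k w ch ih =>
      rw [toNormal]
      split_ifs
      · exact (size_stumpOf_le _).trans (by nlinarith [size_pos (sum k w ch)])
      · have hch : ∑ j, (toNormal V (ch j)).size ≤ 7 * (∑ j, (ch j).size) ^ 2 := by
          refine (sum_le_sum fun j _ => ih j V).trans ?_
          rw [← mul_sum]
          exact Nat.mul_le_mul_left 7 (sum_sq_le_sq_sum_of_nonneg fun j _ => (ch j).size.zero_le)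
        calc 1 + k + ∑ j, (toNormal V (ch j)).size ≤ 1 + k + 7 * (∑ j, (ch j).size) ^ 2 := by
              gcongr
          _ ≤ 7 * (1 + k + ∑ j, (ch j).size) ^ 2 := by ring_nf; omega
  | prod k ch ih =>
      rw [toNormal, size_prod_two, size_prodOver]
      set T := sharedVars fun j => eraseVars V (ch j)
      have hT : T.card ≤ ∑ j, (ch j).size :=
        (card_sharedVars_le _).trans <| sum_le_sum fun j _ =>
          (card_le_card (by simp [scope_eraseVars, sdiff_subset])).trans (card_scope_le_size _)
      have hstumps : ∑ X ∈ T,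
          (stumpOf (leaf X ((prod k fun j => eraseVars V (ch j)).polarity X))).size
          ≤ 5 * T.card := by
        simpa [mul_comm] using sum_le_sum fun X (_ : X ∈ T) => size_stumpOf_le (leaf X _)
      have hch : ∑ j, (toNormal (V ∪ T) (ch j)).size ≤ 7 * (∑ j, (ch j).size) ^ 2 := by
        refine (sum_le_sum fun j _ => ih j (V ∪ T)).trans ?_
        rw [← mul_sum]
        exact Nat.mul_le_mul_left 7 (sum_sq_le_sq_sum_of_nonneg fun j _ => (ch j).size.zero_le)
      simp only [size]
      nlinarith

lemma normal_toNormal {S : SPN N} (hc : S.complete) (hn : S.nonnegWeights)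
    (V : Finset (Fin N)) : (toNormal V S).normal := by
  induction S generalizing V with
  | leaf i b => exact normal_stumpOf (nonnegWeights_eraseVars V hn)
  | sum k w ch ih =>
      have hscope := scope_toNormal V (sum k w ch)
      rw [toNormal] at hscope ⊢
      split_ifs at hscope ⊢ with h
      · exact normal_stumpOf (nonnegWeights_eraseVars V hn)
      · have : Nonempty (Fin k) := by
          obtain ⟨X, hX⟩ := card_pos.mp (by omega : 0 < (eraseVars V (sum k w ch)).scope.card)
          simp only [eraseVars, scope, mem_biUnion] at hX
          exact ⟨hX.choose⟩
        refine normal_sum (fun j => ih j (hc.2 j) (hn.2 j) V) (fun i j => ?_)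
          (normalizeWeights_nonneg fun j => mul_nonneg (hn.1 j) (val_nonneg
            (nonnegWeights_eraseVars V (hn.2 j)))) (sum_normalizeWeights _) (by rw [hscope]; omega)
        simp only [scope_toNormal, scope_eraseVars, hc.1 i j]
  | prod k ch ih =>
      rw [toNormal]
      refine normal_prod_two (normal_prodOver _ (fun X => scope_stumpOf_leaf X _)
        fun X => normal_stumpOf trivial) (normal_prod (fun j => ih j (hc j) (hn j) _)
        fun i j hij => ?_) ?_
      · simp only [scope_toNormal, ← eraseVars_eraseVars]
        exact disjoint_scope_eraseVars_sharedVars _ hij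
      · rw [scope_prodOver _ fun X => scope_stumpOf_leaf X _]
        simpa only [scope, scope_toNormal, ← eraseVars_eraseVars]
          using disjoint_sharedVars_scope_prod_eraseVars fun j => eraseVars V (ch j)

lemma eval_toNormal {S : SPN N} (hc : S.complete) (hcons : S.consistent) (hn : S.nonnegWeights)
    (V : Finset (Fin N)) (hv : 0 < (eraseVars V S).val) (x : Fin N → Bool) :
    (toNormal V S).eval x = (eraseVars V S).Pr x := by
  induction S generalizing V with
  | leaf i b => exact eval_stumpOf (card_scope_eraseVars_leaf_le V i b) hv x
  | sum k w ch ih =>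
      rw [toNormal]
      split_ifs with h
      · exact eval_stumpOf h hv x
      · have hsum : ∑ j, w j * (eraseVars V (ch j)).val ≠ 0 := by
          rw [← val_sum w _ (complete_eraseVars V hc).1]
          exact hv.ne'
        rw [eraseVars, Pr_sum w _ (complete_eraseVars V hc).1 (nonnegWeights_eraseVars V hn).2 hv x]
        refine sum_congr rfl fun j _ => ?_
        rcases (val_nonneg (nonnegWeights_eraseVars V (hn.2 j))).lt_or_eq with hj | hj
        · rw [ih j (hc.2 j) (hcons j) (hn.2 j) V hj]
        · rw [normalizeWeights_of_sum_ne_zero hsum, ← hj, mul_zero, zero_div, zero_mul, zero_mul]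
  | prod k ch ih =>
      set c : Fin k → SPN N := fun j => eraseVars V (ch j)
      set T := sharedVars c
      have hcc : (prod k c).complete := complete_eraseVars V hc
      have hccons : (prod k c).consistent := consistent_eraseVars V hcons
      rw [toNormal, eval_prod_two, eval_prodOver]
      calc _ = (∏ X ∈ T, (leaf X ((prod k c).polarity X)).Pr x) *
              ∏ j, (eraseVars T (c j)).Pr x := by
            congr 1
            · exact prod_congr rfl fun X _ =>
                eval_stumpOf (by simp [scope]) (by rw [val_leaf]; exact one_pos) x
            · refine prod_congr rfl fun j _ => ?_
              have hvj := val_eraseVars_sharedVars_pos hcc hccons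
                (nonnegWeights_eraseVars V hn) hv j
              rw [eraseVars_eraseVars] at hvj ⊢
              exact ih j (hc j) (hcons.2 j) (hn j) _ hvj
        _ = (prod k c).Pr x := by
            rw [Pr_prod_eq_mul_eraseVars_sharedVars hcc hccons, Pr_prodOver _ fun X => rfl,
              Pr_prod _ fun i j => disjoint_scope_eraseVars_sharedVars c]

end SPN

/-- For any complete and consistent SPN `S` (with nonnegative
weights and positive normalizer, so that `Pr_S` is well defined) there exists a
normal SPN `S'` with `Pr_{S'} = Pr_S` and `|S'| = O(|S|^2)`, where a normal SPN
is complete and decomposable, weight-normalized at every sum node, has every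
terminal node a univariate distribution over a Boolean variable and every sum
node of scope size at least 2. -/
theorem spn_normalization :
    ∃ C : ℕ, ∀ (N : ℕ) (S : SPN N), S.complete → S.consistent →
      S.nonnegWeights → 0 < S.val →
      ∃ S' : SPN N, S'.normal ∧ (∀ x : Fin N → Bool, S'.Pr x = S.Pr x) ∧
        S'.size ≤ C * S.size ^ 2 := by
  refine ⟨7, fun N S hc hcons hn hv => ⟨SPN.toNormal ∅ S, SPN.normal_toNormal hc hn ∅,
    fun x => ?_, SPN.size_toNormal_le ∅ S⟩⟩
  rw [← SPN.eraseVars_empty S] at hv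
  have h := SPN.Pr_eq_of_eval_eq_Pr (SPN.scope_toNormal ∅ S)
    (SPN.eval_toNormal hc hcons hn ∅ hv) hv
  rw [SPN.eraseVars_empty] at h
  exact congrFun h x
end
end
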